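/- Let a < b be reals, Σ > 0, μ^c = (a+b)/2, and define F(μ) = ∫_a^b N(ξ|μ,Σ) dξ. Then: (i) F(2μ^c − μ) = F(μ) for all μ ∈ ℝ (symmetry about μ^c); (ii) F is strictly increasing on (−∞, μ^c] and strictly decreasing on [μ^c, ∞); (iii) consequently, for any μ, μ' ∈ ℝ with |μ' − μ^c| ≤ |μ − μ^c|, it holds that F(μ) ≤ F(μ'). -/

import Mathlib

open MeasureTheory Real Set

/-- One-dimensional Gaussian density `N(ξ|μ,v) = (2πv)^{-1/2} exp(−(ξ−μ)²/(2v))`. -/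
noncomputable def gaussPDF (μ v ξ : ℝ) : ℝ :=
  (Real.sqrt (2 * Real.pi * v))⁻¹ * Real.exp (-((ξ - μ) ^ 2) / (2 * v))

/-!
Write `F(μ) = ∫_{a-μ}^{b-μ} φ` with `φ` the centred density. Then `F'(μ) = φ(a-μ) - φ(b-μ)`,
which is positive left of the midpoint `c` because there `a - μ` is closer to `0` than `b - μ` and
`φ` decreases in `|t|`. Evenness of `φ` gives the reflection symmetry, which transports the
monotonicity to the right half-line and reduces (iii) to comparing `c - |μ - c|` with
`c - |μ' - c|` on `(-∞, c]`.
-/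

section Reflection

variable {g : ℝ → ℝ} {c : ℝ}

lemma StrictMonoOn.strictAntiOn_Ici_of_reflect (hg : StrictMonoOn g (Iic c))
    (hsym : ∀ x, g (2 * c - x) = g x) : StrictAntiOn g (Ici c) := by
  intro x hx y hy hxy
  rw [← hsym x, ← hsym y]
  exact hg (by simp only [mem_Iic, mem_Ici] at hy ⊢; linarith)
    (by simp only [mem_Iic, mem_Ici] at hx ⊢; linarith) (by linarith)

lemma apply_eq_apply_sub_abs_of_reflect (hsym : ∀ x, g (2 * c - x) = g x) (x : ℝ) :
    g x = g (c - |x - c|) := by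
  rcases le_total x c with hle | hge
  · rw [abs_of_nonpos (sub_nonpos.2 hle)]
    ring_nf
  · rw [abs_of_nonneg (sub_nonneg.2 hge), ← hsym x]
    ring_nf

lemma MonotoneOn.apply_le_apply_of_abs_sub_le (hg : MonotoneOn g (Iic c))
    (hsym : ∀ x, g (2 * c - x) = g x) {x y : ℝ} (hxy : |y - c| ≤ |x - c|) : g x ≤ g y := by
  rw [apply_eq_apply_sub_abs_of_reflect hsym x, apply_eq_apply_sub_abs_of_reflect hsym y]
  exact hg (by simp [abs_nonneg]) (by simp [abs_nonneg]) (by linarith)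

end Reflection

noncomputable def intervalMass (f : ℝ → ℝ) (a b μ : ℝ) : ℝ :=
  ∫ ξ in a..b, f (ξ - μ)

section IntervalMass

variable {f : ℝ → ℝ}

lemma Function.Even.apply_abs (hf : f.Even) (x : ℝ) : f |x| = f x := by
  rcases abs_choice x with h | h <;> rw [h]
  exact hf x

lemma Function.Even.apply_lt_apply_of_abs_lt (hf : f.Even) (hanti : StrictAntiOn f (Ici 0))
    {s t : ℝ} (hst : |s| < |t|) : f t < f s := by
  rw [← hf.apply_abs s, ← hf.apply_abs t]
  exact hanti (abs_nonneg s) (abs_nonneg t) hst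

lemma intervalMass_eq_integral (f : ℝ → ℝ) (a b μ : ℝ) :
    intervalMass f a b μ = ∫ x in a - μ..b - μ, f x :=
  intervalIntegral.integral_comp_sub_right f μ

lemma Function.Even.intervalMass_reflect (hf : f.Even) (a b μ : ℝ) :
    intervalMass f a b (a + b - μ) = intervalMass f a b μ := by
  have hrefl : ∀ ξ, f (ξ - (a + b - μ)) = f ((a + b - ξ) - μ) := fun ξ => by
    rw [← hf]; ring_nf
  simp only [intervalMass, hrefl, intervalIntegral.integral_comp_sub_left
    (fun ξ => f (ξ - μ)), add_sub_cancel_right, add_sub_cancel_left]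

lemma Continuous.hasDerivAt_intervalMass (hf : Continuous f) (a b μ : ℝ) :
    HasDerivAt (intervalMass f a b) (f (a - μ) - f (b - μ)) μ := by
  set G : ℝ → ℝ := fun u => ∫ x in (0 : ℝ)..u, f x
  have hmass : intervalMass f a b = fun μ => G (b - μ) - G (a - μ) := funext fun μ => by
    rw [intervalMass_eq_integral, intervalIntegral.integral_interval_sub_left
      (hf.intervalIntegrable _ _) (hf.intervalIntegrable _ _)]
  have hG : ∀ d, HasDerivAt (fun μ => G (d - μ)) (-f (d - μ)) μ := fun d => by
    simpa [G, Function.comp_def] using (hf.integral_hasStrictDerivAt 0 (d - μ)).hasDerivAt.comp μ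
      ((hasDerivAt_id μ).const_sub d)
  rw [hmass, show f (a - μ) - f (b - μ) = -f (b - μ) - -f (a - μ) by ring]
  exact (hG b).sub (hG a)

lemma strictMonoOn_intervalMass (hc : Continuous f) (he : f.Even)
    (hanti : StrictAntiOn f (Ici 0)) {a b : ℝ} (hab : a < b) :
    StrictMonoOn (intervalMass f a b) (Iic ((a + b) / 2)) := by
  have hderiv := hc.hasDerivAt_intervalMass a b
  refine strictMonoOn_of_deriv_pos (convex_Iic _)
    (continuous_iff_continuousAt.2 fun μ => (hderiv μ).continuousAt).continuousOn ?_
  intro μ hμ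
  rw [interior_Iic, mem_Iio] at hμ
  have hcloser : |a - μ| < |b - μ| := by
    rw [← sq_lt_sq]; nlinarith
  rw [(hderiv μ).deriv, sub_pos]
  exact he.apply_lt_apply_of_abs_lt hanti hcloser

end IntervalMass

section Gaussian

lemma gaussPDF_eq_gaussPDF_zero (μ v ξ : ℝ) : gaussPDF μ v ξ = gaussPDF 0 v (ξ - μ) := by
  simp [gaussPDF]

lemma continuous_gaussPDF (μ v : ℝ) : Continuous (gaussPDF μ v) := by
  unfold gaussPDF; fun_prop

lemma even_gaussPDF_zero (v : ℝ) : (gaussPDF 0 v).Even := fun x => by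
  simp [gaussPDF]

lemma strictAntiOn_gaussPDF_zero {v : ℝ} (hv : 0 < v) : StrictAntiOn (gaussPDF 0 v) (Ici 0) := by
  intro s hs t ht hst
  simp only [gaussPDF, sub_zero]
  gcongr

end Gaussian

/-- The Gaussian box probability `F(μ) = ∫_a^b N(ξ|μ,v) dξ` as a function of the mean:
(i) it is symmetric about the midpoint `μc = (a+b)/2`;
(ii) strictly increasing on `(−∞, μc]` and strictly decreasing on `[μc, ∞)`;
(iii) hence `|μ' − μc| ≤ |μ − μc|` implies `F(μ) ≤ F(μ')`. -/
theorem gaussian_box_probability_mean (a b v : ℝ) (hab : a < b) (hv : 0 < v) :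
    let μc := (a + b) / 2
    let F := fun μ : ℝ => ∫ ξ in Set.Icc a b, gaussPDF μ v ξ
    (∀ μ : ℝ, F (2 * μc - μ) = F μ) ∧
    StrictMonoOn F (Set.Iic μc) ∧
    StrictAntiOn F (Set.Ici μc) ∧
    (∀ μ μ' : ℝ, |μ' - μc| ≤ |μ - μc| → F μ ≤ F μ') := by
  intro μc F
  have hF : F = intervalMass (gaussPDF 0 v) a b := funext fun μ => by
    simp only [F, intervalMass, integral_Icc_eq_integral_Ioc,
      ← intervalIntegral.integral_of_le hab.le, gaussPDF_eq_gaussPDF_zero μ]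
  have hsym : ∀ μ, F (2 * μc - μ) = F μ := fun μ => by
    rw [hF, show 2 * μc - μ = a + b - μ by ring]
    exact (even_gaussPDF_zero v).intervalMass_reflect a b μ
  have hmono : StrictMonoOn F (Iic μc) := hF ▸ strictMonoOn_intervalMass
    (continuous_gaussPDF 0 v) (even_gaussPDF_zero v) (strictAntiOn_gaussPDF_zero hv) hab
  exact ⟨hsym, hmono, hmono.strictAntiOn_Ici_of_reflect hsym,
    fun μ μ' h => hmono.monotoneOn.apply_le_apply_of_abs_sub_le hsym h⟩
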